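/- Let M be a submonoid of the rational group R that contains the digit-flipping homeomorphisms f_p for infinitely many primes p. Then M is not finitely generated: M is the ascending union of the proper submonoids M_{≤n} generated by elements of M representable by transducers with at most n states, and f_p ∉ M_{≤ p−1} for every prime p. -/

import Mathlib

/-- The Cantor space of infinite binary sequences. -/
abbrev Cantor : Type := ℕ → Bool

/-- Prepend a finite binary word to an infinite binary sequence. -/
def prepend (α : List Bool) (ψ : Cantor) : Cantor :=
  fun n => if h : n < α.length then α.get ⟨n, h⟩ else ψ (n - α.length)

/-- The basic clopen cone `I_α` of sequences beginning with the finite word `α`. -/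
def cone (α : List Bool) : Set Cantor :=
  {ψ | ∀ i (h : i < α.length), ψ i = α.get ⟨i, h⟩}

/-- An asynchronous binary transducer with state set `S` (the initial state `s0`,
the transition function `t` and the output function `o`). -/
structure Transducer (S : Type) where
  s0 : S
  t : S → Bool → S
  o : S → Bool → List Bool

/-- The extended transition function on finite binary words. -/
def Transducer.tStar {S : Type} (T : Transducer S) : S → List Bool → S
  | s, [] => s
  | s, b :: α => T.tStar (T.t s b) α

/-- The extended output function on finite binary words. -/
def Transducer.oStar {S : Type} (T : Transducer S) : S → List Bool → List Bool
  | _, [] => []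
  | s, b :: α => T.o s b ++ T.oStar (T.t s b) α

/-- The length-`n` prefix of an infinite binary sequence, as a finite word. -/
def prefixWord (ψ : Cantor) (n : ℕ) : List Bool := (List.range n).map ψ

/-- `l` is a prefix of the infinite sequence `ψ`. -/
def IsPrefixOf (l : List Bool) (ψ : Cantor) : Prop :=
  ∀ i (h : i < l.length), l.get ⟨i, h⟩ = ψ i

/-- The transducer `T` computes the map `f` on infinite binary sequences: on every input
`ψ` the finite outputs along the run are prefixes of `f ψ`, and their lengths tend to
infinity, so that the infinite concatenated output is exactly `f ψ`. -/
def Transducer.Computes {S : Type} (T : Transducer S) (f : Cantor → Cantor) : Prop :=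
  ∀ ψ : Cantor, (∀ n, IsPrefixOf (T.oStar T.s0 (prefixWord ψ n)) (f ψ)) ∧
    (∀ k, ∃ n, k ≤ (T.oStar T.s0 (prefixWord ψ n)).length)

/-- A homeomorphism of the Cantor space is rational if some asynchronous binary
transducer (with finitely many states) computes it. -/
def IsRational (f : Cantor ≃ₜ Cantor) : Prop :=
  ∃ (n : ℕ) (T : Transducer (Fin n)), T.Computes ⇑f

/-- `r` is the restriction `f|_α`: there is a finite word `β` (necessarily the longest
common prefix of `f(I_α)`) with `f(αω) = β · r(ω)` for all `ω`, where maximality of `β`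
is expressed by saying that the outputs of `r` do not all share their first digit. -/
def IsRestrictionAt (f : Cantor ≃ₜ Cantor) (α : List Bool) (r : Cantor → Cantor) : Prop :=
  ∃ β : List Bool, (∀ ψ : Cantor, f (prepend α ψ) = prepend β (r ψ)) ∧
    ∃ ψ ψ' : Cantor, r ψ 0 ≠ r ψ' 0

/-- The set of all restrictions of `f` as `α` ranges over finite binary words. -/
def restrictions (f : Cantor ≃ₜ Cantor) : Set (Cantor → Cantor) :=
  {r | ∃ α : List Bool, IsRestrictionAt f α r}

/-- `f` has finitely many distinct restrictions. -/
def FinitelyManyRestrictions (f : Cantor ≃ₜ Cantor) : Prop :=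
  (restrictions f).Finite

/-- The group of self-homeomorphisms of the Cantor space, with `(f * g) x = f (g x)`. -/
instance : Group (Cantor ≃ₜ Cantor) where
  mul f g := g.trans f
  one := Homeomorph.refl _
  inv := Homeomorph.symm
  mul_assoc _ _ _ := rfl
  one_mul _ := rfl
  mul_one _ := rfl
  inv_mul_cancel f := Homeomorph.ext fun x => f.symm_apply_apply x

/-- `k` is the homeomorphism `(f, g)`, acting as `f` on `I₀` and as `g` on `I₁`. -/
def IsPair (k f g : Cantor ≃ₜ Cantor) : Prop :=
  (∀ ζ : Cantor, k (prepend [false] ζ) = prepend [false] (f ζ)) ∧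
  (∀ ζ : Cantor, k (prepend [true] ζ) = prepend [true] (g ζ))

/-- `x₀` is the first generator of Thompson's group `F`. -/
def IsX0 (x₀ : Cantor ≃ₜ Cantor) : Prop :=
  (∀ ζ : Cantor, x₀ (prepend [false, false] ζ) = prepend [false] ζ) ∧
  (∀ ζ : Cantor, x₀ (prepend [false, true] ζ) = prepend [true, false] ζ) ∧
  (∀ ζ : Cantor, x₀ (prepend [true] ζ) = prepend [true, true] ζ)

/-- `f` has small support: it is the identity outside a proper nonempty clopen set. -/
def HasSmallSupport (f : Cantor ≃ₜ Cantor) : Prop :=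
  ∃ E : Set Cantor, IsClopen E ∧ E.Nonempty ∧ E ≠ Set.univ ∧ ∀ ψ ∉ E, f ψ = ψ

/-- A group `G` of homeomorphisms of the Cantor space is full if every homeomorphism
that locally agrees with `G` belongs to `G`. -/
def Full (G : Subgroup (Cantor ≃ₜ Cantor)) : Prop :=
  ∀ h : Cantor ≃ₜ Cantor,
    (∀ p : Cantor, ∃ U : Set Cantor, IsOpen U ∧ p ∈ U ∧ ∃ g ∈ G, ∀ x ∈ U, h x = g x) →
    h ∈ G

/-- A group `G` of homeomorphisms of the Cantor space is flexible if for all proper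
nonempty clopen sets `E₁, E₂` there is `g ∈ G` with `g(E₁) ⊆ E₂`. -/
def Flexible (G : Subgroup (Cantor ≃ₜ Cantor)) : Prop :=
  ∀ E₁ E₂ : Set Cantor, IsClopen E₁ → E₁.Nonempty → E₁ ≠ Set.univ →
    IsClopen E₂ → E₂.Nonempty → E₂ ≠ Set.univ →
    ∃ g ∈ G, ⇑g '' E₁ ⊆ E₂

/-- The map flipping every `p`-th binary digit (digits are indexed from 1, so the
digit at index `n : ℕ` is the `(n+1)`-st digit). -/
def flipFun (p : ℕ) (ψ : Cantor) : Cantor :=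
  fun n => if p ∣ (n + 1) then !(ψ n) else ψ n

/-- The submonoid of `M` generated by its elements representable by transducers with
at most `n` states. -/
def boundedGen (M : Submonoid (Cantor ≃ₜ Cantor)) (n : ℕ) : Submonoid (Cantor ≃ₜ Cantor) :=
  Submonoid.closure {f | f ∈ M ∧ ∃ m ≤ n, ∃ T : Transducer (Fin m), T.Computes ⇑f}

/-!
A transducer with fewer than `p` states has, by pigeonhole along the input `000…`, a reachable
cycle of length between `1` and `p - 1`. Cascading a transducer having a reachable cycle `w`
with one having fewer than `p` states, pigeonhole on the states of the second one along
`w, w², …` gives a reachable cycle `w^k` with `0 < k < p`, of length prime to `p` when `p` is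
prime. So every element of `M_{≤ p-1}` has a transducer with a reachable cycle of length prime
to `p`. In a transducer computing `f_p`, on the other hand, the output after an input word `x`
lags behind `x` and its continuation depends only on the state reached, while the continuation
of `f_p` determines the lag and `|x| mod p`; so words reaching the same state have lengths
congruent mod `p`, and reachable cycles have length divisible by `p`. Finally, finitely many
rational generators all lie in some `M_{≤ N}`, which misses `f_p` for the primes `p > N`.
-/

theorem Nat.modEq_of_forall_dvd_add_iff {n a b : ℕ} (hn : 0 < n)
    (h : ∀ j, n ∣ a + j ↔ n ∣ b + j) : a ≡ b [MOD n] := by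
  have hj : a + (n * a - a) = n * a := by
    have := Nat.le_mul_of_pos_left a hn
    omega
  have ha : n ∣ a + (n * a - a) := by rw [hj]; exact dvd_mul_right n a
  exact Nat.ModEq.add_right_cancel' _
    ((Nat.modEq_zero_iff_dvd.2 ha).trans (Nat.modEq_zero_iff_dvd.2 ((h _).1 ha)).symm)

theorem Function.exists_lt_le_natCard_iterate_eq {α : Type*} [Finite α] (g : α → α) (x : α) :
    ∃ i j, i < j ∧ j ≤ Nat.card α ∧ g^[i] x = g^[j] x := by
  have := Fintype.ofFinite α
  obtain ⟨i, j, hne, h⟩ := Fintype.exists_ne_map_eq_of_card_lt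
    (fun i : Fin (Nat.card α + 1) => g^[i] x) (by simp [Nat.card_eq_fintype_card])
  rcases Fin.lt_or_lt_of_ne hne with hij | hij
  · exact ⟨i, j, hij, Nat.lt_succ_iff.1 j.isLt, h⟩
  · exact ⟨j, i, hij, Nat.lt_succ_iff.1 i.isLt, h.symm⟩

@[simp]
theorem prefixWord_length (ψ : Cantor) (n : ℕ) : (prefixWord ψ n).length = n := by
  simp [prefixWord]

theorem prefixWord_prepend (α : List Bool) (ζ : Cantor) (n : ℕ) :
    prefixWord (prepend α ζ) (α.length + n) = α ++ prefixWord ζ n := by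
  refine List.ext_getElem (by simp) fun i _ _ => ?_
  by_cases hi : i < α.length
  · simp [prefixWord, prepend, hi, List.getElem_append_left hi]
  · simp [prefixWord, prepend, hi, List.getElem_append_right (Nat.le_of_not_lt hi)]

theorem eq_prefixWord_of_isPrefixOf {l : List Bool} {ψ : Cantor} (h : IsPrefixOf l ψ) :
    l = prefixWord ψ l.length :=
  List.ext_getElem (by simp) fun i hi _ => by simpa [prefixWord] using h i hi

namespace Transducer

variable {S S' : Type} (T : Transducer S) (T' : Transducer S')

@[simp]
theorem tStar_append (s : S) (α β : List Bool) :
    T.tStar s (α ++ β) = T.tStar (T.tStar s α) β := by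
  induction α generalizing s with
  | nil => rfl
  | cons b α ih => exact ih _

@[simp]
theorem oStar_append (s : S) (α β : List Bool) :
    T.oStar s (α ++ β) = T.oStar s α ++ T.oStar (T.tStar s α) β := by
  induction α generalizing s with
  | nil => rfl
  | cons b α ih => simp [oStar, tStar, ih]

theorem tStar_flatten_replicate (s : S) (w : List Bool) (k : ℕ) :
    T.tStar s (List.replicate k w).flatten = (T.tStar · w)^[k] s := by
  induction k generalizing s with
  | zero => rfl
  | succ k ih => simp [List.replicate_succ, ih]

theorem length_oStar_prefixWord_mono (s : S) (ψ : Cantor) :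
    Monotone fun n => (T.oStar s (prefixWord ψ n)).length :=
  monotone_nat_of_le_succ fun n => by simp [prefixWord, List.range_succ]

def IsCycleAt (u w : List Bool) : Prop :=
  T.tStar (T.tStar T.s0 u) w = T.tStar T.s0 u

theorem isCycleAt_of_iterate_eq (u w : List Bool) {i j : ℕ} (hij : i ≤ j)
    (h : (T.tStar · w)^[i] (T.tStar T.s0 u) = (T.tStar · w)^[j] (T.tStar T.s0 u)) :
    T.IsCycleAt (u ++ (List.replicate i w).flatten) (List.replicate (j - i) w).flatten := by
  simp only [IsCycleAt, tStar_append, tStar_flatten_replicate]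
  rw [← Function.iterate_add_apply, Nat.sub_add_cancel hij, h]

def id : Transducer Unit := ⟨(), fun _ _ => (), fun _ b => [b]⟩

theorem id_oStar (s : Unit) (α : List Bool) : id.oStar s α = α := by
  induction α generalizing s with
  | nil => rfl
  | cons b α ih => exact congrArg (b :: ·) (ih _)

theorem id_computes : id.Computes _root_.id := fun ψ =>
  ⟨fun n i hi => by simp [id_oStar, prefixWord], fun k => ⟨k, by simp [id_oStar]⟩⟩

def comp (T' : Transducer S') (T : Transducer S) : Transducer (S × S') where
  s0 := (T.s0, T'.s0)
  t q b := (T.t q.1 b, T'.tStar q.2 (T.o q.1 b))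
  o q b := T'.oStar q.2 (T.o q.1 b)

theorem comp_tStar (q : S × S') (α : List Bool) :
    (T'.comp T).tStar q α = (T.tStar q.1 α, T'.tStar q.2 (T.oStar q.1 α)) := by
  induction α generalizing q with
  | nil => rfl
  | cons b α ih =>
    rw [tStar, ih]
    simp [comp, tStar, oStar]

theorem comp_oStar (q : S × S') (α : List Bool) :
    (T'.comp T).oStar q α = T'.oStar q.2 (T.oStar q.1 α) := by
  induction α generalizing q with
  | nil => rfl
  | cons b α ih =>
    rw [oStar, ih]
    simp [comp, oStar]

namespace Computes

variable {T T'} {f : Cantor → Cantor} (hT : T.Computes f)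
include hT

theorem comp {f' : Cantor → Cantor} (hT' : T'.Computes f') : (T'.comp T).Computes (f' ∘ f) := by
  intro ψ
  have hpre (n : ℕ) : T.oStar T.s0 (prefixWord ψ n) =
      prefixWord (f ψ) (T.oStar T.s0 (prefixWord ψ n)).length :=
    eq_prefixWord_of_isPrefixOf ((hT ψ).1 n)
  have hout (n : ℕ) : (T'.comp T).oStar (T'.comp T).s0 (prefixWord ψ n) =
      T'.oStar T'.s0 (T.oStar T.s0 (prefixWord ψ n)) :=
    comp_oStar T T' _ _
  refine ⟨fun n => ?_, fun k => ?_⟩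
  · rw [hout, hpre]
    exact (hT' (f ψ)).1 _
  · obtain ⟨n', hn'⟩ := (hT' (f ψ)).2 k
    obtain ⟨n, hn⟩ := (hT ψ).2 n'
    refine ⟨n, ?_⟩
    rw [hout, hpre]
    exact hn'.trans (T'.length_oStar_prefixWord_mono _ _ hn)

theorem apply_prepend_of_lt (x : List Bool) (ζ : Cantor) {j : ℕ}
    (hj : j < (T.oStar T.s0 x).length) : f (prepend x ζ) j = (T.oStar T.s0 x)[j] := by
  have h := (hT (prepend x ζ)).1 (x.length + 0)
  rw [prefixWord_prepend, oStar_append] at h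
  simpa [List.getElem_append_left hj] using (h j (by simp; omega)).symm

theorem exists_lt_length_oStar (x : List Bool) (ζ : Cantor) (i : ℕ) :
    ∃ n, i < (T.oStar (T.tStar T.s0 x) (prefixWord ζ n)).length := by
  obtain ⟨n, hn⟩ := (hT (prepend x ζ)).2 ((T.oStar T.s0 x).length + i + 1)
  have hmono := T.length_oStar_prefixWord_mono T.s0 (prepend x ζ) (Nat.le_add_left n x.length)
  simp only [prefixWord_prepend, oStar_append, List.length_append] at hmono
  exact ⟨n, by omega⟩

theorem apply_prepend_add (x : List Bool) (ζ : Cantor) (n : ℕ) {i : ℕ}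
    (hi : i < (T.oStar (T.tStar T.s0 x) (prefixWord ζ n)).length) :
    f (prepend x ζ) ((T.oStar T.s0 x).length + i) =
      (T.oStar (T.tStar T.s0 x) (prefixWord ζ n))[i] := by
  have h := (hT (prepend x ζ)).1 (x.length + n)
  rw [prefixWord_prepend, oStar_append] at h
  simpa using (h ((T.oStar T.s0 x).length + i) (by simp; omega)).symm

theorem apply_prepend_add_eq_of_tStar_eq {x y : List Bool}
    (hxy : T.tStar T.s0 x = T.tStar T.s0 y) (ζ : Cantor) (i : ℕ) :
    f (prepend x ζ) ((T.oStar T.s0 x).length + i) =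
      f (prepend y ζ) ((T.oStar T.s0 y).length + i) := by
  obtain ⟨n, hn⟩ := hT.exists_lt_length_oStar x ζ i
  rw [hT.apply_prepend_add x ζ n hn, hT.apply_prepend_add y ζ n (hxy ▸ hn)]
  simp only [hxy]

end Computes

end Transducer

def Oblivious (p : ℕ) (f : Cantor → Cantor) : Prop :=
  ∃ (S : Type) (_ : Finite S) (T : Transducer S), T.Computes f ∧
    ∃ u w, T.IsCycleAt u w ∧ ¬ p ∣ w.length

theorem oblivious_of_natCard_lt {S : Type} [Finite S] {p : ℕ} (T : Transducer S)
    (hcard : Nat.card S < p) {f : Cantor → Cantor} (hT : T.Computes f) : Oblivious p f := by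
  obtain ⟨i, j, hij, hj, h⟩ := Function.exists_lt_le_natCard_iterate_eq (T.tStar · [false]) T.s0
  refine ⟨S, inferInstance, T, hT, _, _, T.isCycleAt_of_iterate_eq [] [false] hij.le h, ?_⟩
  simpa using Nat.not_dvd_of_pos_of_lt (Nat.sub_pos_of_lt hij) (by omega)

theorem Oblivious.comp {p : ℕ} (hp : p.Prime) {f f' : Cantor → Cantor} (hf : Oblivious p f)
    {S' : Type} [Finite S'] (T' : Transducer S') (hcard : Nat.card S' < p)
    (hT' : T'.Computes f') : Oblivious p (f' ∘ f) := by
  obtain ⟨S, _, T, hT, u, w, hcyc, hndvd⟩ := hf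
  set s := T.tStar T.s0 u
  set g : S' → S' := (T'.tStar · (T.oStar s w))
  obtain ⟨i, j, hij, hj, h⟩ :=
    Function.exists_lt_le_natCard_iterate_eq g (T'.tStar T'.s0 (T.oStar T.s0 u))
  have hsemi : Function.Semiconj (s, ·) g ((T'.comp T).tStar · w) := fun y => by
    simp only [Transducer.comp_tStar, g]
    rw [hcyc]
  have hstart : (T'.comp T).tStar (T'.comp T).s0 u = (s, T'.tStar T'.s0 (T.oStar T.s0 u)) :=
    Transducer.comp_tStar T T' _ u
  refine ⟨S × S', inferInstance, T'.comp T, hT.comp hT', _, _,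
    (T'.comp T).isCycleAt_of_iterate_eq u w hij.le ?_, ?_⟩
  · rw [hstart, ← hsemi.iterate_right, ← hsemi.iterate_right, h]
  · simp only [List.length_flatten, List.map_replicate, List.sum_replicate, smul_eq_mul]
    intro hdvd
    rcases hp.dvd_mul.1 hdvd with h | h
    · exact Nat.not_dvd_of_pos_of_lt (Nat.sub_pos_of_lt hij) (by omega) h
    · exact hndvd h

theorem oblivious_of_mem_boundedGen {p : ℕ} (hp : p.Prime) {M : Submonoid (Cantor ≃ₜ Cantor)}
    {f : Cantor ≃ₜ Cantor} (hf : f ∈ boundedGen M (p - 1)) : Oblivious p f := by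
  induction hf using Submonoid.closure_induction_left with
  | one =>
    exact oblivious_of_natCard_lt Transducer.id (by simpa using hp.one_lt) Transducer.id_computes
  | mul_left g hg h _ ih =>
    obtain ⟨-, m, hm, T, hT⟩ := hg
    exact ih.comp hp T (by simpa using Nat.lt_of_le_sub_one hp.pos hm) hT

theorem flipFun_prepend_add (p : ℕ) (x : List Bool) (ζ : Cantor) (j : ℕ) :
    flipFun p (prepend x ζ) (x.length + j) = (ζ j ^^ decide (p ∣ x.length + j + 1)) := by
  by_cases h : p ∣ x.length + j + 1 <;> simp [flipFun, prepend, h]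

theorem eq_and_eq_of_forall_xor_eq {a b : ℕ} {e e' : Bool}
    (h : ∀ ζ : Cantor, (ζ a ^^ e) = (ζ b ^^ e')) : a = b ∧ e = e' := by
  have he : e = e' := by simpa using h fun _ => false
  subst he
  refine ⟨by_contra fun hab => ?_, rfl⟩
  simpa [Ne.symm hab] using h fun n => decide (n = a)

section Flip

variable {p : ℕ} {S : Type} {T : Transducer S} (hT : T.Computes (flipFun p))
include hT

theorem length_oStar_le_of_computes_flipFun (x : List Bool) :
    (T.oStar T.s0 x).length ≤ x.length := by
  by_contra! hlt
  have hconst (ζ : Cantor) :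
      (ζ 0 ^^ decide (p ∣ x.length + 0 + 1)) = (T.oStar T.s0 x)[x.length] :=
    (flipFun_prepend_add p x ζ 0).symm.trans (hT.apply_prepend_of_lt x ζ hlt)
  simpa using (hconst fun _ => false).trans (hconst fun _ => true).symm

theorem length_modEq_of_computes_flipFun (hp : 0 < p) {x y : List Bool}
    (hxy : T.tStar T.s0 x = T.tStar T.s0 y) : x.length ≡ y.length [MOD p] := by
  set a := x.length - (T.oStar T.s0 x).length
  set b := y.length - (T.oStar T.s0 y).length
  have hx := length_oStar_le_of_computes_flipFun hT x
  have hy := length_oStar_le_of_computes_flipFun hT y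
  have key (j : ℕ) : b + j = a + j ∧
      decide (p ∣ x.length + (b + j) + 1) = decide (p ∣ y.length + (a + j) + 1) :=
    eq_and_eq_of_forall_xor_eq fun ζ => by
      have h := hT.apply_prepend_add_eq_of_tStar_eq hxy ζ (a + b + j)
      rwa [show (T.oStar T.s0 x).length + (a + b + j) = x.length + (b + j) by omega,
        show (T.oStar T.s0 y).length + (a + b + j) = y.length + (a + j) by omega,
        flipFun_prepend_add, flipFun_prepend_add] at h
  have hab : b = a := by simpa using (key 0).1
  refine Nat.ModEq.add_right_cancel' (a + 1) (Nat.modEq_of_forall_dvd_add_iff hp fun j => ?_)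
  simpa [hab, add_assoc, add_comm 1, add_left_comm] using (key j).2

end Flip

theorem not_oblivious_flipFun {p : ℕ} (hp : 0 < p) : ¬ Oblivious p (flipFun p) := by
  rintro ⟨S, _, T, hT, u, w, hcyc, hndvd⟩
  have h := length_modEq_of_computes_flipFun hT hp (x := u ++ w) (y := u)
    (by rw [Transducer.tStar_append]; exact hcyc)
  exact hndvd (Nat.modEq_zero_iff_dvd.1 (Nat.ModEq.add_left_cancel' u.length (by simpa using h)))

theorem boundedGen_mono (M : Submonoid (Cantor ≃ₜ Cantor)) : Monotone (boundedGen M) :=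
  fun _ _ hmn => Submonoid.closure_mono fun _ ⟨hfM, m, hm, hT⟩ => ⟨hfM, m, hm.trans hmn, hT⟩

theorem exists_le_boundedGen_of_fg {M : Submonoid (Cantor ≃ₜ Cantor)}
    (hMR : ∀ f ∈ M, IsRational f) (hM : M.FG) : ∃ N, M ≤ boundedGen M N := by
  obtain ⟨G, hG⟩ := hM
  have hGM {g : Cantor ≃ₜ Cantor} (hg : g ∈ G) : g ∈ M := hG ▸ Submonoid.subset_closure hg
  choose n hn using fun g (hg : g ∈ G) => hMR g (hGM hg)
  refine ⟨G.attach.sup fun g => n g.1 g.2, hG.symm.trans_le (Submonoid.closure_le.2 fun g hg => ?_)⟩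
  exact Submonoid.subset_closure
    ⟨hGM hg, n g hg, Finset.le_sup (f := fun g => n g.1 g.2) (G.mem_attach ⟨g, hg⟩), hn g hg⟩
/-- a submonoid `M` of the rational group containing `f_p` for infinitely
many primes `p` is not finitely generated; indeed `f_p ∉ M_{≤ p-1}` for every prime `p`. -/
theorem submonoid_not_fg (M : Submonoid (Cantor ≃ₜ Cantor))
    (hMR : ∀ f ∈ M, IsRational f)
    (hinf : {p : ℕ | p.Prime ∧ ∃ fp ∈ M, ∀ ψ : Cantor, fp ψ = flipFun p ψ}.Infinite) :
    (∀ p : ℕ, p.Prime → ∀ fp : Cantor ≃ₜ Cantor, (∀ ψ : Cantor, fp ψ = flipFun p ψ) →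
      fp ∉ boundedGen M (p - 1)) ∧ ¬ M.FG := by
  have hflip (p : ℕ) (hp : p.Prime) (fp : Cantor ≃ₜ Cantor) (hfp : ∀ ψ, fp ψ = flipFun p ψ) :
      fp ∉ boundedGen M (p - 1) := fun hmem => by
    have h := oblivious_of_mem_boundedGen hp hmem
    rw [show ⇑fp = flipFun p from funext hfp] at h
    exact not_oblivious_flipFun hp.pos h
  refine ⟨hflip, fun hfg => ?_⟩
  obtain ⟨N, hN⟩ := exists_le_boundedGen_of_fg hMR hfg
  obtain ⟨p, ⟨hp, fp, hfpM, hfp⟩, hNp⟩ := hinf.exists_gt N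
  exact hflip p hp fp hfp (boundedGen_mono M (Nat.le_sub_one_of_lt hNp) (hN hfpM))
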